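/- arXiv:2002.12875 — 6 statements merged into one kernel-verified Lean document; each statement's English description precedes it below -/
import Mathlib

section
/- For the Onsager potential g(u) = √(1−u²), the Legendre coefficient λ_{2ℓ} := ∫_{-1}^1 √(1−u²) P_{2ℓ}(u) du satisfies, for every ℓ ≥ 1, λ_{2ℓ} = −π / (2(ℓ+1)(2ℓ−1) 2^{4ℓ}) · C(2ℓ,ℓ)², where C(2ℓ,ℓ) is the central binomial coefficient. -/
/-!
Write `μ q = ∫_{-1}^1 √(1 - u²) q(u) du` for polynomials `q`. Integrating by parts against
`(1 - u²)^{3/2}`, which vanishes at `±1`, gives `3 μ(X q) = μ((1 - X²) q')`. Together with Bonnet's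
recursion and `(1 - X²) P'_{n+1} = (n + 1) (P_n - X P_{n+1})`, both consequences of Rodrigues'
formula, this yields `(n + 2)(n + 4) μ(P_{n+2}) = (n + 1)(n - 1) μ(P_n)`. The closed form follows
by induction from `μ(P_0) = π / 2` and `(m + 1) C(2m+2, m+1) = 2 (2m + 1) C(2m, m)`.
-/

open MeasureTheory Polynomial Real

/-- The `n`-th Legendre polynomial, via Rodrigues' formula. -/
noncomputable def legendre (n : ℕ) : Polynomial ℝ :=
  Polynomial.C (1 / (2 ^ n * n.factorial : ℝ)) *
    (Polynomial.derivative^[n] ((Polynomial.X ^ 2 - 1) ^ n))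

section Rodrigues

variable (R : Type*) [CommRing R]

noncomputable def rodrigues (n : ℕ) : R[X] :=
  derivative^[n] ((X ^ 2 - 1) ^ n)

variable {R}

theorem derivative_sq_sub_one_pow_succ (n : ℕ) :
    derivative ((X ^ 2 - 1 : R[X]) ^ (n + 1)) = (2 * (n + 1)) • ((X ^ 2 - 1) ^ n * X) := by
  rw [derivative_pow, derivative_sub, derivative_X_pow, derivative_one, nsmul_eq_mul,
    C_eq_natCast, C_eq_natCast, Nat.add_sub_cancel]
  push_cast
  ring

theorem derivative_rodrigues_succ (n : ℕ) :
    derivative (rodrigues R (n + 1)) =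
      (2 * (n + 1)) • (X * derivative (rodrigues R n) + (n + 1) • rodrigues R n) := by
  simp only [rodrigues, ← Function.iterate_succ_apply' derivative]
  rw [Function.iterate_succ_apply, derivative_sq_sub_one_pow_succ, iterate_derivative_smul,
    iterate_derivative_mul_X, Nat.add_sub_cancel]
  ring

/-- Expanding `D^[n+1] ((X²-1)^(n+1))` once through `D ((X²-1)^(n+1))` and once through
`(X²-1)^(n+1) = (X²-1)^n X X - (X²-1)^n`, and comparing, eliminates `D^[n-1] ((X²-1)^n)`. -/
theorem rodrigues_succ (n : ℕ) :
    rodrigues R (n + 1) =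
      2 * ((X ^ 2 - 1) * derivative (rodrigues R n) + (n + 1) • (X * rodrigues R n)) := by
  simp only [rodrigues, ← Function.iterate_succ_apply' derivative]
  set q : R[X] := (X ^ 2 - 1) ^ n
  have h₁ : derivative^[n + 1] ((X ^ 2 - 1 : R[X]) ^ (n + 1)) =
      (2 * (n + 1)) • (derivative^[n] q * X + n • derivative^[n - 1] q) := by
    rw [Function.iterate_succ_apply, derivative_sq_sub_one_pow_succ,
      iterate_derivative_smul, iterate_derivative_mul_X]
  have h₂ : derivative^[n + 1] ((X ^ 2 - 1 : R[X]) ^ (n + 1)) =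
      derivative^[n + 1] (q * X * X) - derivative^[n + 1] q := by
    rw [← iterate_derivative_sub, pow_succ]
    congr 1
    ring
  rw [iterate_derivative_mul_X (q * X), iterate_derivative_mul_X q, Nat.add_sub_cancel,
    iterate_derivative_mul_X q] at h₂
  linear_combination 2 * h₂ - h₁

end Rodrigues

theorem legendre_eq_C_mul_rodrigues (n : ℕ) :
    legendre n = C (1 / (2 ^ n * n.factorial : ℝ)) * rodrigues ℝ n :=
  rfl

theorem legendre_zero : legendre 0 = 1 := by
  simp [legendre]

theorem nsmul_C_one_div_two_pow_mul_factorial_succ (n : ℕ) :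
    (2 * (n + 1)) • C (1 / (2 ^ (n + 1) * (n + 1).factorial : ℝ)) =
      C (1 / (2 ^ n * n.factorial : ℝ)) := by
  rw [← map_nsmul]
  congr 1
  rw [Nat.factorial_succ, nsmul_eq_mul]
  push_cast
  field_simp
  ring

theorem derivative_legendre_succ (n : ℕ) :
    derivative (legendre (n + 1)) = X * derivative (legendre n) + (n + 1) • legendre n := by
  rw [legendre_eq_C_mul_rodrigues, legendre_eq_C_mul_rodrigues, derivative_C_mul,
    derivative_C_mul, derivative_rodrigues_succ, ← nsmul_C_one_div_two_pow_mul_factorial_succ n]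
  ring

theorem succ_nsmul_legendre_succ (n : ℕ) :
    (n + 1) • legendre (n + 1) =
      (X ^ 2 - 1) * derivative (legendre n) + (n + 1) • (X * legendre n) := by
  rw [legendre_eq_C_mul_rodrigues, legendre_eq_C_mul_rodrigues, derivative_C_mul,
    rodrigues_succ, ← nsmul_C_one_div_two_pow_mul_factorial_succ n]
  ring

theorem one_sub_sq_mul_derivative_legendre_succ (n : ℕ) :
    (1 - X ^ 2) * derivative (legendre (n + 1)) =
      (n + 1) • (legendre n - X * legendre (n + 1)) := by
  linear_combination derivative_legendre_succ n -
    X * (X * derivative_legendre_succ n - succ_nsmul_legendre_succ n)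

theorem add_two_nsmul_legendre_add_two (n : ℕ) :
    (n + 2) • legendre (n + 2) =
      (2 * n + 3) • (X * legendre (n + 1)) - (n + 1) • legendre n := by
  linear_combination succ_nsmul_legendre_succ (n + 1) - one_sub_sq_mul_derivative_legendre_succ n

-- For `s < 0` both sides vanish: `√s = 0` and `s ^ (3/2) = exp (log s * 3/2) * cos (3π/2)`.
theorem mul_sqrt_eq_rpow (s : ℝ) : s * √s = s ^ (3 / 2 : ℝ) := by
  rcases lt_or_ge s 0 with hs | hs
  · rw [sqrt_eq_zero'.2 hs.le, mul_zero, rpow_def_of_neg hs,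
      show (3 / 2 : ℝ) * π = π / 2 + π by ring, cos_add_pi, cos_pi_div_two, neg_zero, mul_zero]
  · rw [sqrt_eq_rpow, ← rpow_one_add' hs (by norm_num)]
    norm_num

theorem hasDerivAt_mul_sqrt (t : ℝ) : HasDerivAt (fun s ↦ s * √s) (3 / 2 * √t) t := by
  simp only [mul_sqrt_eq_rpow]
  convert hasDerivAt_rpow_const (x := t) (p := 3 / 2) (Or.inr (by norm_num)) using 1
  rw [sqrt_eq_rpow]
  norm_num

noncomputable def onsagerPairing : ℝ[X] →ₗ[ℝ] ℝ where
  toFun q := ∫ u in (-1 : ℝ)..1, √(1 - u ^ 2) * q.eval u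
  map_add' p q := by
    have hc : Continuous fun u : ℝ ↦ √(1 - u ^ 2) := by fun_prop
    simp only [eval_add, mul_add]
    exact intervalIntegral.integral_add ((hc.mul p.continuous).intervalIntegrable _ _)
      ((hc.mul q.continuous).intervalIntegrable _ _)
  map_smul' a q := by
    simp only [eval_smul, smul_eq_mul, mul_left_comm _ a, intervalIntegral.integral_const_mul,
      RingHom.id_apply]

theorem onsagerPairing_apply (q : ℝ[X]) :
    onsagerPairing q = ∫ u in (-1 : ℝ)..1, √(1 - u ^ 2) * q.eval u :=
  rfl

theorem onsagerPairing_one : onsagerPairing 1 = π / 2 := by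
  simpa [onsagerPairing_apply] using integral_sqrt_one_sub_sq

theorem three_mul_onsagerPairing_X_mul (q : ℝ[X]) :
    3 * onsagerPairing (X * q) = onsagerPairing ((1 - X ^ 2) * derivative q) := by
  have hv (x : ℝ) : HasDerivAt (fun x ↦ -((1 - x ^ 2) * √(1 - x ^ 2))) (3 * x * √(1 - x ^ 2)) x := by
    have := ((hasDerivAt_mul_sqrt (1 - x ^ 2)).comp x ((hasDerivAt_pow 2 x).const_sub 1)).neg
    exact this.congr_deriv (by push_cast; ring)
  have hibp := intervalIntegral.integral_mul_deriv_eq_deriv_mul (a := -1) (b := 1)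
    (fun x _ ↦ q.hasDerivAt x) (fun x _ ↦ hv x)
    ((derivative q).continuous.intervalIntegrable _ _)
    ((by fun_prop : Continuous fun x : ℝ ↦ 3 * x * √(1 - x ^ 2)).intervalIntegrable _ _)
  norm_num at hibp
  rw [onsagerPairing_apply, onsagerPairing_apply, ← intervalIntegral.integral_const_mul]
  convert hibp using 1 <;> refine intervalIntegral.integral_congr fun x _ ↦ ?_ <;>
    simp only [eval_mul, eval_sub, eval_one, eval_pow, eval_X] <;> ring

theorem onsagerPairing_legendre_add_two (n : ℕ) :
    ((n : ℝ) + 2) * (n + 4) * onsagerPairing (legendre (n + 2)) =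
      ((n : ℝ) + 1) * (n - 1) * onsagerPairing (legendre n) := by
  have hbonnet := congrArg onsagerPairing (add_two_nsmul_legendre_add_two n)
  have hderiv := congrArg onsagerPairing (one_sub_sq_mul_derivative_legendre_succ n)
  have hibp := three_mul_onsagerPairing_X_mul (legendre (n + 1))
  simp only [map_sub, map_nsmul] at hbonnet hderiv
  push_cast [nsmul_eq_mul] at hbonnet hderiv
  linear_combination ((n : ℝ) + 4) * hbonnet + (2 * (n : ℝ) + 3) * (hibp + hderiv)

theorem onsagerPairing_legendre_two_mul (m : ℕ) :
    onsagerPairing (legendre (2 * m)) =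
      -(π / (2 * ((m : ℝ) + 1) * (2 * m - 1) * 2 ^ (4 * m))) * ((2 * m).choose m : ℝ) ^ 2 := by
  induction m with
  | zero =>
    rw [Nat.mul_zero, legendre_zero, onsagerPairing_one]
    norm_num
    ring
  | succ m ih =>
    have hrec := onsagerPairing_legendre_add_two (2 * m)
    have hbinom :
        ((2 * (m + 1)).choose (m + 1) : ℝ) = 2 * (2 * m + 1) * (2 * m).choose m / (m + 1) := by
      rw [eq_div_iff (by positivity), mul_comm]
      exact_mod_cast Nat.succ_mul_centralBinom_succ m
    have hm : (2 * (m : ℝ) - 1) ≠ 0 := sub_ne_zero.2 (by norm_cast; omega)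
    rw [ih, show 2 * m + 2 = 2 * (m + 1) by ring] at hrec
    push_cast at hrec ⊢
    apply mul_left_cancel₀ (show (2 * (m : ℝ) + 2) * (2 * m + 4) ≠ 0 by positivity)
    rw [hrec, hbinom, show 2 * ((m : ℝ) + 1) - 1 = 2 * m + 1 by ring]
    field_simp
    ring

theorem onsager_legendre_coeffs_general (ℓ : ℕ) :
    ∫ u in (-1 : ℝ)..1, Real.sqrt (1 - u ^ 2) * (legendre (2 * ℓ)).eval u =
      -(Real.pi / (2 * ((ℓ : ℝ) + 1) * (2 * (ℓ : ℝ) - 1) * 2 ^ (4 * ℓ))) *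
        ((2 * ℓ).choose ℓ : ℝ) ^ 2 :=
  onsagerPairing_legendre_two_mul ℓ

/-- Legendre coefficients of the Onsager potential `g(u) = √(1−u²)`:
`λ_{2ℓ} = −π C(2ℓ,ℓ)² / (2(ℓ+1)(2ℓ−1) 2^{4ℓ})` for `ℓ ≥ 1`. -/
theorem onsager_legendre_coeffs (ℓ : ℕ) (hℓ : 1 ≤ ℓ) :
    ∫ u in (-1 : ℝ)..1, Real.sqrt (1 - u ^ 2) * (legendre (2 * ℓ)).eval u =
      -(Real.pi / (2 * ((ℓ : ℝ) + 1) * (2 * (ℓ : ℝ) - 1) * 2 ^ (4 * ℓ))) *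
        ((2 * ℓ).choose ℓ : ℝ) ^ 2 :=
  onsager_legendre_coeffs_general ℓ
end

section
/- The sequence λ_{2ℓ} = −π C(2ℓ,ℓ)² / (2(ℓ+1)(2ℓ−1) 2^{4ℓ}), defined for ℓ ≥ 1, is non-decreasing in ℓ and tends to 0 as ℓ → ∞; in particular its minimum is attained at ℓ = 1 with value λ_2 = −π/16. -/
open Real Filter

lemma central_le_four_pow (ℓ : ℕ) : ((2 * ℓ).choose ℓ : ℝ) ≤ 4 ^ ℓ := by
  have h1 : (2 * ℓ).choose ℓ ≤ (2 * ℓ + 1).choose ℓ := Nat.choose_le_choose ℓ (Nat.le_succ _)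
  have h2 := Nat.choose_middle_le_pow ℓ
  exact_mod_cast h1.trans h2

lemma aux_mono (x c c' P : ℝ) (hx1 : 1 ≤ x) (hc : 0 < c) (hP : 0 < P)
    (hrel : (x + 1) * c' = 2 * (2 * x + 1) * c) :
    -(Real.pi * c ^ 2) / (2 * (x + 1) * (2 * x - 1) * P) ≤
      -(Real.pi * c' ^ 2) / (2 * (x + 1 + 1) * (2 * (x + 1) - 1) * (P * 16)) := by
  have hpi := Real.pi_pos
  have hD : (0 : ℝ) < 2 * (x + 1) * (2 * x - 1) * P := by
    have : (0 : ℝ) < 2 * x - 1 := by linarith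
    positivity
  have hD' : (0 : ℝ) < 2 * (x + 1 + 1) * (2 * (x + 1) - 1) * (P * 16) := by
    have : (0 : ℝ) < 2 * (x + 1) - 1 := by linarith
    positivity
  rw [div_le_div_iff₀ hD hD', neg_mul, neg_mul, neg_le_neg_iff]
  have hkey : c' ^ 2 * (x + 1) ^ 2 = 4 * (2 * x + 1) ^ 2 * c ^ 2 := by
    linear_combination ((x + 1) * c' + 2 * (2 * x + 1) * c) * hrel
  have key2 : 8 * (2 * x + 1) ^ 2 * (2 * x - 1) ≤ 32 * (x + 1 + 1) * (2 * x + 1) * (x + 1) := by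
    nlinarith [hx1]
  have hposn : (0 : ℝ) ≤ Real.pi * c ^ 2 * P := by positivity
  have key3 := mul_le_mul_of_nonneg_left key2 hposn
  have h2 : Real.pi * c' ^ 2 * (2 * (x + 1) * (2 * x - 1) * P) * (x + 1) ≤
      Real.pi * c ^ 2 * (2 * (x + 1 + 1) * (2 * (x + 1) - 1) * (P * 16)) * (x + 1) := by
    have e : Real.pi * c' ^ 2 * (2 * (x + 1) * (2 * x - 1) * P) * (x + 1) =
        Real.pi * (c' ^ 2 * (x + 1) ^ 2) * (2 * (2 * x - 1) * P) := by ring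
    rw [e, hkey]
    nlinarith [key3]
  exact le_of_mul_le_mul_right h2 (by linarith)

/-- The sequence `λ_{2ℓ} = −π C(2ℓ,ℓ)² / (2(ℓ+1)(2ℓ−1) 2^{4ℓ})` of Legendre coefficients
of the Onsager potential is non-decreasing for `ℓ ≥ 1`, tends to `0`, and its minimum is
attained at `ℓ = 1` with value `−π/16`. -/
theorem onsager_coeffs_monotone_tendsto_min (lam : ℕ → ℝ)
    (hlam : ∀ ℓ : ℕ, lam ℓ =
      -(Real.pi * ((2 * ℓ).choose ℓ : ℝ) ^ 2) /
        (2 * ((ℓ : ℝ) + 1) * (2 * (ℓ : ℝ) - 1) * 2 ^ (4 * ℓ))) :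
    (∀ ℓ : ℕ, 1 ≤ ℓ → lam ℓ ≤ lam (ℓ + 1)) ∧
    Tendsto lam atTop (nhds 0) ∧
    (∀ ℓ : ℕ, 1 ≤ ℓ → lam 1 ≤ lam ℓ) ∧
    lam 1 = -(Real.pi / 16) := by
  have hpi := Real.pi_pos
  -- monotonicity
  have hmono : ∀ ℓ : ℕ, 1 ≤ ℓ → lam ℓ ≤ lam (ℓ + 1) := by
    intro ℓ hℓ
    rw [hlam ℓ, hlam (ℓ + 1)]
    have hx1 : (1 : ℝ) ≤ (ℓ : ℝ) := by exact_mod_cast hℓ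
    have hcpos : (0 : ℝ) < ((2 * ℓ).choose ℓ : ℝ) := by
      exact_mod_cast Nat.choose_pos (show ℓ ≤ 2 * ℓ by omega)
    have hrelN : (ℓ + 1) * (2 * (ℓ + 1)).choose (ℓ + 1) = 2 * (2 * ℓ + 1) * (2 * ℓ).choose ℓ := by
      have := Nat.succ_mul_centralBinom_succ ℓ
      rwa [Nat.centralBinom, Nat.centralBinom] at this
    have hrel : ((ℓ : ℝ) + 1) * ((2 * (ℓ + 1)).choose (ℓ + 1) : ℝ) =
        2 * (2 * (ℓ : ℝ) + 1) * ((2 * ℓ).choose ℓ : ℝ) := by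
      exact_mod_cast congrArg (Nat.cast : ℕ → ℝ) hrelN
    have hP : (0 : ℝ) < 2 ^ (4 * ℓ) := by positivity
    have hpow : (2 : ℝ) ^ (4 * (ℓ + 1)) = 2 ^ (4 * ℓ) * 16 := by
      rw [show 4 * (ℓ + 1) = 4 * ℓ + 4 by ring, pow_add]; norm_num
    have := aux_mono (ℓ : ℝ) ((2 * ℓ).choose ℓ : ℝ) ((2 * (ℓ + 1)).choose (ℓ + 1) : ℝ)
      ((2 : ℝ) ^ (4 * ℓ)) hx1 hcpos hP hrel
    rw [hpow]
    push_cast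
    convert this using 3
  -- bounds for ℓ ≥ 1
  have hbound : ∀ ℓ : ℕ, 1 ≤ ℓ → -(Real.pi / ℓ) ≤ lam ℓ ∧ lam ℓ ≤ 0 := by
    intro ℓ hℓ
    have hx1 : (1 : ℝ) ≤ (ℓ : ℝ) := by exact_mod_cast hℓ
    have hP : (0 : ℝ) < 2 ^ (4 * ℓ) := by positivity
    have hD : (0 : ℝ) < 2 * ((ℓ : ℝ) + 1) * (2 * (ℓ : ℝ) - 1) * 2 ^ (4 * ℓ) := by
      have : (0 : ℝ) < 2 * (ℓ : ℝ) - 1 := by linarith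
      positivity
    have hcle : ((2 * ℓ).choose ℓ : ℝ) ^ 2 ≤ 2 ^ (4 * ℓ) := by
      have h := central_le_four_pow ℓ
      have hc0 : (0 : ℝ) ≤ ((2 * ℓ).choose ℓ : ℝ) := by positivity
      have h2 : ((2 * ℓ).choose ℓ : ℝ) ^ 2 ≤ ((4 : ℝ) ^ ℓ) ^ 2 := by nlinarith
      calc ((2 * ℓ).choose ℓ : ℝ) ^ 2 ≤ ((4 : ℝ) ^ ℓ) ^ 2 := h2
        _ = 2 ^ (4 * ℓ) := by
            rw [show (4 : ℝ) = 2 ^ 2 by norm_num, ← pow_mul, ← pow_mul]; ring_nf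
    constructor
    · rw [hlam ℓ, neg_div, neg_le_neg_iff, div_le_div_iff₀ hD (by positivity : (0:ℝ) < (ℓ:ℝ))]
      have h3 : Real.pi * ((2 * ℓ).choose ℓ : ℝ) ^ 2 * (ℓ : ℝ) ≤
          Real.pi * 2 ^ (4 * ℓ) * (ℓ : ℝ) := by
        have := mul_le_mul_of_nonneg_left hcle hpi.le
        nlinarith [this]
      have h4 : Real.pi * 2 ^ (4 * ℓ) * (ℓ : ℝ) ≤
          Real.pi * (2 * ((ℓ : ℝ) + 1) * (2 * (ℓ : ℝ) - 1) * 2 ^ (4 * ℓ)) := by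
        have h5 : (ℓ : ℝ) ≤ 2 * ((ℓ : ℝ) + 1) * (2 * (ℓ : ℝ) - 1) := by nlinarith
        have := mul_le_mul_of_nonneg_left h5 (mul_pos hpi hP).le
        nlinarith [this]
      linarith
    · rw [hlam ℓ]
      apply div_nonpos_of_nonpos_of_nonneg
      · have : (0 : ℝ) ≤ Real.pi * ((2 * ℓ).choose ℓ : ℝ) ^ 2 := by positivity
        linarith
      · exact hD.le
  -- limit
  have htend : Tendsto lam atTop (nhds 0) := by
    have hlow : Tendsto (fun ℓ : ℕ => -(Real.pi / ℓ)) atTop (nhds 0) := by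
      have := (tendsto_const_div_atTop_nhds_zero_nat Real.pi).neg
      simpa using this
    refine tendsto_of_tendsto_of_tendsto_of_le_of_le' hlow tendsto_const_nhds ?_ ?_
    · filter_upwards [eventually_ge_atTop 1] with ℓ hℓ using (hbound ℓ hℓ).1
    · filter_upwards [eventually_ge_atTop 1] with ℓ hℓ using (hbound ℓ hℓ).2
  refine ⟨hmono, htend, ?_, ?_⟩
  · intro ℓ hℓ
    induction ℓ with
    | zero => omega
    | succ n ih =>
      rcases Nat.lt_or_ge n 1 with h | h
      · interval_cases n
        · exact le_refl _
      · exact (ih h).trans (hmono n h)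
  · rw [hlam 1]
    norm_num [Nat.choose]
    ring
end

section
/- For every even positive integer ℓ = 2s, the integral of the cube of the ℓ-th Legendre polynomial is strictly positive and equals ∫_{-1}^1 P_{2s}(u)³ du = 2 · (2s)!³ (3s)!² / ((6s+1)! · s!⁶). -/
open MeasureTheory Polynomial Real

namespace Leg
open Polynomial



noncomputable def q : ℝ[X] := X ^ 2 - 1
noncomputable def D (n : ℕ) (p : ℝ[X]) : ℝ[X] := derivative^[n] p
noncomputable def L (n : ℕ) : ℝ[X] := D n (q ^ n)

lemma Dsucc (n : ℕ) (p : ℝ[X]) : D (n + 1) p = derivative (D n p) := by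
  simp [D, Function.iterate_succ_apply']

lemma Dsucc' (n : ℕ) (p : ℝ[X]) : D (n + 1) p = D n (derivative p) := by
  simp [D, Function.iterate_succ_apply]

lemma Dzero (p : ℝ[X]) : D 0 p = p := rfl

lemma Dnat_mul (n k : ℕ) (p : ℝ[X]) : D n ((k : ℝ[X]) * p) = (k : ℝ[X]) * D n p := by
  induction n with
  | zero => rfl
  | succ m ih => rw [Dsucc, Dsucc, ih, derivative_mul, derivative_natCast, zero_mul, zero_add]

lemma dq : derivative q = 2 * X := by
  simp only [q, derivative_sub, derivative_one, derivative_X_pow, sub_zero]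
  norm_num
  exact map_ofNat C 2

lemma iterD_Xmul (p : ℝ[X]) : ∀ n : ℕ,
    D (n + 1) (X * p) = X * D (n + 1) p + ((n : ℝ[X]) + 1) * D n p := by
  intro n
  induction n generalizing p with
  | zero => simp [Dsucc, Dzero, derivative_mul]; ring
  | succ m ih =>
    rw [Dsucc, ih p]
    simp only [derivative_add, derivative_mul, derivative_X, derivative_natCast,
      derivative_ofNat, derivative_one, ← Dsucc]
    push_cast
    ring

lemma iterD_qmul (p : ℝ[X]) : ∀ n : ℕ,
    D (n + 2) (q * p) = q * D (n + 2) p + (2 * ((n : ℝ[X]) + 2)) * (X * D (n + 1) p)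
        + (((n : ℝ[X]) + 2) * ((n : ℝ[X]) + 1)) * D n p := by
  intro n
  induction n generalizing p with
  | zero =>
    rw [Dsucc, Dsucc, Dzero]
    simp only [derivative_add, derivative_mul, dq, derivative_X, derivative_natCast,
      derivative_ofNat, derivative_one, Dsucc, Dzero]
    push_cast
    ring
  | succ m ih =>
    rw [Dsucc, ih p]
    simp only [derivative_add, derivative_mul, dq, derivative_X, derivative_natCast,
      derivative_ofNat, derivative_one, ← Dsucc]
    push_cast
    ring

lemma dqpow (n : ℕ) : derivative (q ^ (n + 1)) = ((2 * n + 2 : ℕ) : ℝ[X]) * (X * q ^ n) := by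
  rw [derivative_pow, dq]
  simp only [C_eq_natCast]
  push_cast
  ring

lemma E2 (m : ℕ) : L (m + 2) = ((2 * m + 4 : ℕ) : ℝ[X]) *
    (X * D (m + 1) (q ^ (m + 1)) + ((m : ℝ[X]) + 1) * D m (q ^ (m + 1))) := by
  have h : L (m + 2) = D (m + 1) (derivative (q ^ (m + 2))) := by
    rw [L, Dsucc']
  rw [h, dqpow (m + 1), Dnat_mul, iterD_Xmul]
  push_cast
  ring

lemma E1 (m : ℕ) : L (m + 2) = q * D (m + 2) (q ^ (m + 1))
    + (2 * ((m : ℝ[X]) + 2)) * (X * D (m + 1) (q ^ (m + 1)))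
    + (((m : ℝ[X]) + 2) * ((m : ℝ[X]) + 1)) * D m (q ^ (m + 1)) := by
  have h : L (m + 2) = D (m + 2) (q * q ^ (m + 1)) := by
    rw [L, ← pow_succ']
  rw [h, iterD_qmul]

lemma star (m : ℕ) : q * D (m + 2) (q ^ (m + 1))
    = ((m : ℝ[X]) + 1) * ((m : ℝ[X]) + 2) * D m (q ^ (m + 1)) := by
  have h1 := E1 m
  have h2 := E2 m
  push_cast at h1 h2 ⊢
  linear_combination h2 - h1

lemma claimA (n : ℕ) : L (n + 1) = (2 * ((n : ℝ[X]) + 1)) * (X * L n)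
    + 2 * (q * derivative (L n)) := by
  cases n with
  | zero =>
    have : L 1 = derivative q := by rw [L, pow_one]; rfl
    rw [this, dq, L, Dzero, pow_zero]
    simp
  | succ m =>
    have h2 := E2 m
    have hs := star m
    have hd : derivative (L (m + 1)) = D (m + 2) (q ^ (m + 1)) := by
      rw [L, ← Dsucc]
    have hL : L (m + 1) = D (m + 1) (q ^ (m + 1)) := rfl
    rw [hd, hL]
    push_cast at h2 hs ⊢
    linear_combination h2 - 2 * hs

lemma ode (n : ℕ) : q * derivative (derivative (L n)) + 2 * (X * derivative (L n))
    = ((n : ℝ[X]) * ((n : ℝ[X]) + 1)) * L n := by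
  cases n with
  | zero =>
    rw [L, Dzero, pow_zero]
    simp
  | succ m =>
    have hs := congrArg derivative (star m)
    simp only [derivative_mul, dq, derivative_add, derivative_natCast, derivative_one, derivative_ofNat,
      zero_mul, mul_zero, zero_add, add_zero] at hs
    have hd : derivative (L (m + 1)) = D (m + 2) (q ^ (m + 1)) := by rw [L, ← Dsucc]
    have hd2 : derivative (D (m + 2) (q ^ (m + 1))) = D (m + 3) (q ^ (m + 1)) := by
      rw [← Dsucc]
    have hd3 : derivative (D m (q ^ (m + 1))) = D (m + 1) (q ^ (m + 1)) := by
      rw [← Dsucc]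
    have hL : L (m + 1) = D (m + 1) (q ^ (m + 1)) := rfl
    rw [hd2, hd3] at hs
    rw [hd, hd2, hL]
    push_cast at hs ⊢
    linear_combination hs

lemma claimB (n : ℕ) : q * derivative (L (n + 1))
    = ((n : ℝ[X]) + 1) * (X * L (n + 1)) - 2 * ((n : ℝ[X]) + 1) ^ 2 * L n := by
  have hA := claimA n
  have hdA := congrArg derivative hA
  simp only [derivative_mul, derivative_add, derivative_natCast, derivative_ofNat,
    derivative_one, derivative_X, dq, zero_mul, mul_zero, zero_add, add_zero, mul_one] at hdA
  have hO := ode n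
  have hq : q = X ^ 2 - 1 := rfl
  linear_combination q * hdA + 2 * q * hO - ((n : ℝ[X]) + 1) * X * hA
    + 2 * ((n : ℝ[X]) + 1) ^ 2 * hq * L n

lemma bonnet (n : ℕ) : L (n + 2) = (4 * ((n : ℝ[X]) + 1) + 2) * (X * L (n + 1))
    - 4 * ((n : ℝ[X]) + 1) ^ 2 * L n := by
  have h1 := claimA (n + 1)
  have h2 := claimB n
  push_cast at h1 ⊢
  linear_combination h1 + 2 * h2


lemma L0 : L 0 = 1 := by simp [L, D]
lemma L1 : L 1 = 2 * X := by
  have h : L 1 = derivative q := by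
    simp [L, D, pow_one]
  rw [h, q]
  simp only [derivative_sub, derivative_one, derivative_X_pow, sub_zero]
  norm_num
  exact map_ofNat C 2

lemma ev_aux (x : ℝ) (e : ℝ) (he : e = 1 ∨ e = -1) :
    ∀ n : ℕ, eval e (L n) = e ^ n * ((2 ^ n * n.factorial : ℕ) : ℝ) := by
  have key : ∀ n : ℕ, eval e (L n) = e ^ n * ((2 ^ n * n.factorial : ℕ) : ℝ) ∧
      eval e (L (n+1)) = e ^ (n+1) * ((2 ^ (n+1) * (n+1).factorial : ℕ) : ℝ) := by
    intro n
    induction n with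
    | zero =>
      constructor
      · simp [L0]
      · rw [L1]
        simp [Nat.factorial]
        ring
    | succ m ih =>
      refine ⟨ih.2, ?_⟩
      have hb := congrArg (eval e) (bonnet m)
      simp only [eval_mul, eval_add, eval_sub, eval_pow, eval_natCast, eval_ofNat,
        eval_X, eval_one] at hb
      rw [hb, ih.1, ih.2]
      have he2 : e ^ 2 = 1 := by rcases he with h | h <;> rw [h] <;> norm_num
      have : e ^ (m + 1 + 1) = e ^ m * e ^ 2 := by ring
      rw [this, he2]
      have : e ^ (m + 1) = e ^ m * e := by ring
      rw [this]
      push_cast [Nat.factorial_succ, pow_succ]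
      ring_nf
      rcases he with h | h <;> rw [h] <;> ring
  exact fun n => (key n).1

lemma ev1 (n : ℕ) : eval 1 (L n) = ((2 ^ n * n.factorial : ℕ) : ℝ) := by
  simpa using ev_aux 1 1 (Or.inl rfl) n

lemma evm1 (n : ℕ) : eval (-1) (L n) = (-1) ^ n * ((2 ^ n * n.factorial : ℕ) : ℝ) :=
  ev_aux (-1) (-1) (Or.inr rfl) n

lemma integral_deriv (p : ℝ[X]) :
    ∫ u in (-1:ℝ)..1, eval u (derivative p) = eval 1 p - eval (-1) p := by
  apply intervalIntegral.integral_eq_sub_of_hasDerivAt (fun x _ => p.hasDerivAt x)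
  exact ((derivative p).continuous).intervalIntegrable _ _

noncomputable def NN (s : ℕ) : ℝ[X] := ((-12096) + (-59328)*((s:ℕ):ℝ[X]) + (-109440)*((s:ℕ):ℝ[X])^2 + (-89856)*((s:ℕ):ℝ[X])^3 + (-27648)*((s:ℕ):ℝ[X])^4) * ((L (2*s+1))^3) + ((-7776) + (-44064)*((s:ℕ):ℝ[X]) + (-91584)*((s:ℕ):ℝ[X])^2 + (-82944)*((s:ℕ):ℝ[X])^3 + (-27648)*((s:ℕ):ℝ[X])^4) * (X^2*(L (2*s+1))^3) + (19440 + 101088*((s:ℕ):ℝ[X]) + 196992*((s:ℕ):ℝ[X])^2 + 170496*((s:ℕ):ℝ[X])^3 + 55296*((s:ℕ):ℝ[X])^4) * (X^4*(L (2*s+1))^3) + (41472 + 324864*((s:ℕ):ℝ[X]) + 1002240*((s:ℕ):ℝ[X])^2 + 1520640*((s:ℕ):ℝ[X])^3 + 1133568*((s:ℕ):ℝ[X])^4 + 331776*((s:ℕ):ℝ[X])^5) * (X*(L (2*s))*(L (2*s+1))^2) + ((-38880) + (-305856)*((s:ℕ):ℝ[X]) + (-950400)*((s:ℕ):ℝ[X])^2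 + (-1458432)*((s:ℕ):ℝ[X])^3 + (-1105920)*((s:ℕ):ℝ[X])^4 + (-331776)*((s:ℕ):ℝ[X])^5) * (X^3*(L (2*s))*(L (2*s+1))^2) + ((-31104) + (-321408)*((s:ℕ):ℝ[X]) + (-1368576)*((s:ℕ):ℝ[X])^2 + (-3068928)*((s:ℕ):ℝ[X])^3 + (-3815424)*((s:ℕ):ℝ[X])^4 + (-2488320)*((s:ℕ):ℝ[X])^5 + (-663552)*((s:ℕ):ℝ[X])^6) * ((L (2*s))^2*(L (2*s+1))) + (25920 + 273024*((s:ℕ):ℝ[X]) + 1188864*((s:ℕ):ℝ[X])^2 + 2737152*((s:ℕ):ℝ[X])^3 + 3511296*((s:ℕ):ℝ[X])^4 + 2377728*((s:ℕ):ℝ[X])^5 + 663552*((s:ℕ):ℝ[X])^6) * (X^2*(L (2*s))^2*(L (2*s+1))) + (3456 + 39168*((s:ℕ):ℝ[X]) + 184320*((s:ℕ):ℝ[X])^2 + 460800*((s:ℕ):ℝ[X])^3 + 645120*((s:ℕ):ℝ[X])^4 + 479232*((s:ℕ):ℝ[X])^5 + 147456*((s:ℕ):ℝ[X])^6) * (X*(L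 (2*s))^3)

lemma key (s : ℕ) :
    ((X:ℝ[X])^2-1) * ((18*(5 + 6*((s:ℕ):ℝ[X]))*(7 + 6*((s:ℕ):ℝ[X]))) * (L (2*s+2))^3
       - (9216*(1 + 2*((s:ℕ):ℝ[X]))^5*(1 + ((s:ℕ):ℝ[X]))*(1 + 3*((s:ℕ):ℝ[X]))*(2 + 3*((s:ℕ):ℝ[X]))) * (L (2*s))^3)
    = ((X:ℝ[X])^2-1) * derivative (NN s) := by
  have h1 : L (2*s+1) = (2 * (((2*s : ℕ) : ℝ[X]) + 1)) * (X * L (2*s))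
      + 2 * (((X:ℝ[X])^2-1) * derivative (L (2*s))) := claimA (2*s)
  have h2 : ((X:ℝ[X])^2-1) * derivative (L (2*s+1))
      = (((2*s : ℕ) : ℝ[X]) + 1) * (X * L (2*s+1)) - 2 * (((2*s : ℕ) : ℝ[X]) + 1) ^ 2 * L (2*s) := claimB (2*s)
  have h3 : L (2*s+2) = (4 * (((2*s : ℕ) : ℝ[X]) + 1) + 2) * (X * L (2*s+1))
      - 4 * (((2*s : ℕ) : ℝ[X]) + 1) ^ 2 * L (2*s) := bonnet (2*s)
  rw [NN]
  set Lp := L (2*s)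
  set Lq := L (2*s+1)
  set LR := L (2*s+2)
  simp only [derivative_add, derivative_sub, derivative_mul, derivative_pow, derivative_X_pow,
    derivative_X, derivative_natCast, derivative_ofNat, derivative_one, derivative_neg, derivative_intCast, C_eq_natCast]
  push_cast at h1 h2 h3 ⊢
  linear_combination (((20736 + 162432*((s:ℕ):ℝ[X]) + 501120*((s:ℕ):ℝ[X])^2 + 760320*((s:ℕ):ℝ[X])^3 + 566784*((s:ℕ):ℝ[X])^4 + 165888*((s:ℕ):ℝ[X])^5) * (X*Lq^2) + ((-19440) + (-152928)*((s:ℕ):ℝ[X]) + (-475200)*((s:ℕ):ℝ[X])^2 + (-729216)*((s:ℕ):ℝ[X])^3 + (-552960)*((s:ℕ):ℝ[X])^4 + (-165888)*((s:ℕ):ℝ[X])^5) * (X^3*Lq^2) + ((-31104) + (-321408)*((s:ℕ):ℝ[X]) + (-1368576)*((s:ℕ):ℝ[X])^2 + (-3068928)*((s:ℕ):ℝ[X])^3 + (-3815424)*((s:ℕ):ℝ[X])^4 + (-2488320)*((s:ℕ):ℝ[X])^5 + (-663552)*((s:ℕ):ℝ[X])^6) * (Lp*Lq) + (25920 + 273024*((s:ℕ):ℝ[X])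 + 1188864*((s:ℕ):ℝ[X])^2 + 2737152*((s:ℕ):ℝ[X])^3 + 3511296*((s:ℕ):ℝ[X])^4 + 2377728*((s:ℕ):ℝ[X])^5 + 663552*((s:ℕ):ℝ[X])^6) * (X^2*Lp*Lq) + (5184 + 58752*((s:ℕ):ℝ[X]) + 276480*((s:ℕ):ℝ[X])^2 + 691200*((s:ℕ):ℝ[X])^3 + 967680*((s:ℕ):ℝ[X])^4 + 718848*((s:ℕ):ℝ[X])^5 + 221184*((s:ℕ):ℝ[X])^6) * (X*Lp^2)) : ℝ[X]) * h1
    + (((36288 + 177984*((s:ℕ):ℝ[X]) + 328320*((s:ℕ):ℝ[X])^2 + 269568*((s:ℕ):ℝ[X])^3 + 82944*((s:ℕ):ℝ[X])^4) * (Lq^2) + (23328 + 132192*((s:ℕ):ℝ[X]) + 274752*((s:ℕ):ℝ[X])^2 + 248832*((s:ℕ):ℝ[X])^3 + 82944*((s:ℕ):ℝ[X])^4) * (X^2*Lq^2) + ((-58320) + (-303264)*((s:ℕ):ℝ[X]) + (-590976)*((s:ℕ):ℝ[X])^2 + (-511488)*((s:ℕ):ℝ[X])^3 + (-165888)*((s:ℕ):ℝ[X])^4)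 * (X^4*Lq^2) + ((-82944) + (-649728)*((s:ℕ):ℝ[X]) + (-2004480)*((s:ℕ):ℝ[X])^2 + (-3041280)*((s:ℕ):ℝ[X])^3 + (-2267136)*((s:ℕ):ℝ[X])^4 + (-663552)*((s:ℕ):ℝ[X])^5) * (X*Lp*Lq) + (77760 + 611712*((s:ℕ):ℝ[X]) + 1900800*((s:ℕ):ℝ[X])^2 + 2916864*((s:ℕ):ℝ[X])^3 + 2211840*((s:ℕ):ℝ[X])^4 + 663552*((s:ℕ):ℝ[X])^5) * (X^3*Lp*Lq) + (31104 + 321408*((s:ℕ):ℝ[X]) + 1368576*((s:ℕ):ℝ[X])^2 + 3068928*((s:ℕ):ℝ[X])^3 + 3815424*((s:ℕ):ℝ[X])^4 + 2488320*((s:ℕ):ℝ[X])^5 + 663552*((s:ℕ):ℝ[X])^6) * (Lp^2) + ((-25920) + (-273024)*((s:ℕ):ℝ[X]) + (-1188864)*((s:ℕ):ℝ[X])^2 + (-2737152)*((s:ℕ):ℝ[X])^3 + (-3511296)*((s:ℕ):ℝ[X])^4 + (-2377728)*((s:ℕ):ℝ[X])^5 + (-663552)*((s:ℕ):ℝ[X])^6)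 * (X^2*Lp^2)) : ℝ[X]) * h2
    + (((18*(5 + 6*((s:ℕ):ℝ[X]))*(7 + 6*((s:ℕ):ℝ[X])))*(X^2-1)*(LR^2 + LR*((6 + 8*((s:ℕ):ℝ[X]))*(X*Lq) - 4*(1 + 2*((s:ℕ):ℝ[X]))^2*Lp) + ((6 + 8*((s:ℕ):ℝ[X]))*(X*Lq) - 4*(1 + 2*((s:ℕ):ℝ[X]))^2*Lp)^2)) : ℝ[X]) * h3

lemma Xsq_ne : ((X:ℝ[X])^2 - 1) ≠ 0 := fun h => by
  have := congrArg (eval 0) h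
  simp at this

lemma keyc (s : ℕ) :
    (18*(5 + 6*((s:ℕ):ℝ[X]))*(7 + 6*((s:ℕ):ℝ[X]))) * (L (2*s+2))^3
       - (9216*(1 + 2*((s:ℕ):ℝ[X]))^5*(1 + ((s:ℕ):ℝ[X]))*(1 + 3*((s:ℕ):ℝ[X]))*(2 + 3*((s:ℕ):ℝ[X]))) * (L (2*s))^3
    = derivative (NN s) := mul_left_cancel₀ Xsq_ne (key s)

lemma hE (s : ℕ) : ((2 ^ (2*s+1) * (2*s+1).factorial : ℕ) : ℝ)
    = 2*(2*(s:ℝ)+1) * ((2 ^ (2*s) * (2*s).factorial : ℕ) : ℝ) := by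
  push_cast [Nat.factorial_succ, pow_succ]
  ring

lemma evalN1 (s : ℕ) : eval 1 (NN s) = 0 := by
  rw [NN]
  simp only [eval_add, eval_mul, eval_pow, eval_X, eval_natCast, eval_ofNat, eval_one,
    eval_neg, eval_intCast, eval_sub, ev1, hE]
  push_cast
  ring

lemma evalNm1 (s : ℕ) : eval (-1) (NN s) = 0 := by
  rw [NN]
  simp only [eval_add, eval_mul, eval_pow, eval_X, eval_natCast, eval_ofNat, eval_one,
    eval_neg, eval_intCast, eval_sub, evm1, hE]
  have h1 : ((-1:ℝ)) ^ (2*s) = 1 := by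
    rw [pow_mul]; norm_num
  have h2 : ((-1:ℝ)) ^ (2*s+1) = -1 := by
    rw [pow_succ, h1]; norm_num
  rw [h1, h2]
  push_cast
  ring

lemma Jrec (s : ℕ) :
    (18*(5 + 6*(s:ℝ))*(7 + 6*(s:ℝ))) * ∫ u in (-1:ℝ)..1, (eval u (L (2*s+2)))^3
    = (9216*(1 + 2*(s:ℝ))^5*(1 + (s:ℝ))*(1 + 3*(s:ℝ))*(2 + 3*(s:ℝ)))
        * ∫ u in (-1:ℝ)..1, (eval u (L (2*s)))^3 := by
  have hpt : ∀ u : ℝ,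
      (18*(5 + 6*(s:ℝ))*(7 + 6*(s:ℝ))) * (eval u (L (2*s+2)))^3
      - (9216*(1 + 2*(s:ℝ))^5*(1 + (s:ℝ))*(1 + 3*(s:ℝ))*(2 + 3*(s:ℝ))) * (eval u (L (2*s)))^3
      = eval u (derivative (NN s)) := by
    intro u
    have := congrArg (eval u) (keyc s)
    simpa using this
  have hint : ∫ u in (-1:ℝ)..1, eval u (derivative (NN s)) = 0 := by
    rw [integral_deriv, evalN1, evalNm1, sub_zero]
  have hsplit : (∫ u in (-1:ℝ)..1,
      ((18*(5 + 6*(s:ℝ))*(7 + 6*(s:ℝ))) * (eval u (L (2*s+2)))^3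
      - (9216*(1 + 2*(s:ℝ))^5*(1 + (s:ℝ))*(1 + 3*(s:ℝ))*(2 + 3*(s:ℝ))) * (eval u (L (2*s)))^3))
      = (18*(5 + 6*(s:ℝ))*(7 + 6*(s:ℝ))) * (∫ u in (-1:ℝ)..1, (eval u (L (2*s+2)))^3)
      - (9216*(1 + 2*(s:ℝ))^5*(1 + (s:ℝ))*(1 + 3*(s:ℝ))*(2 + 3*(s:ℝ)))
        * ∫ u in (-1:ℝ)..1, (eval u (L (2*s)))^3 := by
    rw [intervalIntegral.integral_sub, intervalIntegral.integral_const_mul,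
      intervalIntegral.integral_const_mul]
    · exact (continuous_const.mul ((L (2*s+2)).continuous.pow 3)).intervalIntegrable _ _
    · exact (continuous_const.mul ((L (2*s)).continuous.pow 3)).intervalIntegrable _ _
  have : (∫ u in (-1:ℝ)..1,
      ((18*(5 + 6*(s:ℝ))*(7 + 6*(s:ℝ))) * (eval u (L (2*s+2)))^3
      - (9216*(1 + 2*(s:ℝ))^5*(1 + (s:ℝ))*(1 + 3*(s:ℝ))*(2 + 3*(s:ℝ))) * (eval u (L (2*s)))^3)) = 0 := by
    rw [intervalIntegral.integral_congr (fun u _ => hpt u)]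
    exact hint
  rw [hsplit] at this
  linarith

lemma legendre_eq (n : ℕ) : legendre n = C (1/(2^n * n.factorial : ℝ)) * L n := rfl

lemma legendre_eval (n : ℕ) (u : ℝ) :
    eval u (legendre n) = (1/(2^n * n.factorial : ℝ)) * eval u (L n) := by
  rw [legendre_eq]; simp

noncomputable def Ii (s : ℕ) : ℝ := ∫ u in (-1:ℝ)..1, (eval u (legendre (2*s)))^3
noncomputable def E (t : ℕ) : ℝ := 2^(2*t) * ((2*t).factorial : ℝ)
noncomputable def T (s : ℕ) : ℝ :=
  2 * ((2 * s).factorial : ℝ) ^ 3 * ((3 * s).factorial : ℝ) ^ 2 /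
    (((6 * s + 1).factorial : ℝ) * (s.factorial : ℝ) ^ 6)

lemma Epos (t : ℕ) : 0 < E t := by
  have h : (0:ℝ) < ((2*t).factorial : ℝ) := by exact_mod_cast (2*t).factorial_pos
  rw [E]
  positivity

lemma intL_eq (t : ℕ) :
    (∫ u in (-1:ℝ)..1, (eval u (L (2*t)))^3) = (E t)^3 * Ii t := by
  have hE := (Epos t).ne'
  rw [Ii]
  have : ∀ u : ℝ, (eval u (legendre (2*t)))^3 = (1/E t)^3 * (eval u (L (2*t)))^3 := by
    intro u
    rw [legendre_eval, E]
    push_cast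
    ring
  rw [intervalIntegral.integral_congr (fun u _ => this u), intervalIntegral.integral_const_mul]
  field_simp

lemma Iirec (s : ℕ) :
    (18*(5 + 6*(s:ℝ))*(7 + 6*(s:ℝ))) * ((E (s+1))^3 * Ii (s+1))
    = (9216*(1 + 2*(s:ℝ))^5*(1 + (s:ℝ))*(1 + 3*(s:ℝ))*(2 + 3*(s:ℝ))) * ((E s)^3 * Ii s) := by
  have h := Jrec s
  rw [show 2*s+2 = 2*(s+1) by ring] at h
  rw [← intL_eq, ← intL_eq]
  exact h

lemma fact_cast_pos (n : ℕ) : (0:ℝ) < (n.factorial : ℝ) := by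
  exact_mod_cast n.factorial_pos

lemma Tpos (s : ℕ) : 0 < T s := by
  rw [T]
  have h1 := fact_cast_pos (2*s)
  have h2 := fact_cast_pos (3*s)
  have h3 := fact_cast_pos (6*s+1)
  have h4 := fact_cast_pos s
  positivity

lemma Tstep (s : ℕ) :
    (18*(5 + 6*(s:ℝ))*(7 + 6*(s:ℝ))) * ((E (s+1))^3 * T (s+1))
    = (9216*(1 + 2*(s:ℝ))^5*(1 + (s:ℝ))*(1 + 3*(s:ℝ))*(2 + 3*(s:ℝ))) * ((E s)^3 * T s) := by
  have h2 : ((2*(s+1)).factorial : ℝ) = (2*(s:ℝ)+2)*((2*(s:ℝ)+1)*((2*s).factorial : ℝ)) := by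
    rw [show 2*(s+1) = 2*s+1+1 by ring, Nat.factorial_succ, Nat.factorial_succ]
    push_cast
    ring
  have h3 : ((3*(s+1)).factorial : ℝ)
      = (3*(s:ℝ)+3)*((3*(s:ℝ)+2)*((3*(s:ℝ)+1)*((3*s).factorial : ℝ))) := by
    rw [show 3*(s+1) = 3*s+1+1+1 by ring, Nat.factorial_succ, Nat.factorial_succ,
      Nat.factorial_succ]
    push_cast
    ring
  have h6 : ((6*(s+1)+1).factorial : ℝ)
      = (6*(s:ℝ)+7)*((6*(s:ℝ)+6)*((6*(s:ℝ)+5)*((6*(s:ℝ)+4)*((6*(s:ℝ)+3)*((6*(s:ℝ)+2)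
        *((6*s+1).factorial : ℝ)))))) := by
    rw [show 6*(s+1)+1 = 6*s+1+1+1+1+1+1+1 by ring, Nat.factorial_succ, Nat.factorial_succ,
      Nat.factorial_succ, Nat.factorial_succ, Nat.factorial_succ, Nat.factorial_succ]
    push_cast
    ring
  have h1 : ((s+1).factorial : ℝ) = ((s:ℝ)+1)*(s.factorial : ℝ) := by
    rw [Nat.factorial_succ]; push_cast; ring
  rw [T, T, E, E, h2, h3, h6, h1]
  have d1 := (fact_cast_pos (2*s)).ne'
  have d2 := (fact_cast_pos (3*s)).ne'
  have d3 := (fact_cast_pos (6*s+1)).ne'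
  have d4 := (fact_cast_pos s).ne'
  have d5 : ((6:ℝ)*s+2) ≠ 0 := by positivity
  have d6 : ((6:ℝ)*s+3) ≠ 0 := by positivity
  have d7 : ((6:ℝ)*s+4) ≠ 0 := by positivity
  have d8 : ((6:ℝ)*s+5) ≠ 0 := by positivity
  have d9 : ((6:ℝ)*s+6) ≠ 0 := by positivity
  have d10 : ((6:ℝ)*s+7) ≠ 0 := by positivity
  field_simp
  push_cast
  ring

lemma Istep (s : ℕ) (h : Ii s = T s) : Ii (s+1) = T (s+1) := by
  have hA : (18*(5 + 6*(s:ℝ))*(7 + 6*(s:ℝ))) * (E (s+1))^3 ≠ 0 := by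
    have := Epos (s+1)
    positivity
  have h1 := Iirec s
  rw [h, ← Tstep s] at h1
  have h2 : (18*(5 + 6*(s:ℝ))*(7 + 6*(s:ℝ))) * (E (s+1))^3 * Ii (s+1)
      = (18*(5 + 6*(s:ℝ))*(7 + 6*(s:ℝ))) * (E (s+1))^3 * T (s+1) := by
    linear_combination h1
  exact mul_left_cancel₀ hA h2

lemma hL2 : L 2 = 12*X^2 - 4 := by
  have hq2 : q^2 = X^4 - 2*X^2 + 1 := by rw [q]; ring
  rw [L, Dsucc, Dsucc, Dzero, hq2]
  simp only [derivative_add, derivative_sub, derivative_mul, derivative_X_pow,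
    derivative_ofNat, derivative_natCast, derivative_one, derivative_X, C_eq_natCast, zero_mul, mul_zero,
    zero_add, add_zero, sub_zero, mul_one]
  push_cast
  ring

lemma heval2 (u : ℝ) : eval u (legendre 2) = (3*u^2-1)/2 := by
  rw [legendre_eval, hL2]
  simp [Nat.factorial]
  ring

noncomputable def M : ℝ[X] := C (27/56)*X^7 + C (-27/40)*X^5 + C (3/8)*X^3 + C (-1/8)*X

lemma base : Ii 1 = T 1 := by
  have hpt : ∀ u : ℝ, (eval u (legendre 2))^3 = eval u (derivative M) := by
    intro u
    rw [heval2, M]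
    simp only [derivative_add, derivative_mul, derivative_C, derivative_X_pow, derivative_X,
      zero_mul, zero_add, mul_one, eval_add, eval_mul, eval_C, eval_pow, eval_X, eval_natCast]
    push_cast
    ring
  have h1 : Ii 1 = ∫ u in (-1:ℝ)..1, eval u (derivative M) := by
    rw [Ii]
    exact intervalIntegral.integral_congr (fun u _ => hpt u)
  rw [h1, integral_deriv, M, T]
  simp [Nat.factorial]
  norm_num

lemma Imain : ∀ s : ℕ, 1 ≤ s → Ii s = T s := by
  intro s hs
  induction s, hs using Nat.le_induction with
  | base => exact base
  | succ n _ ih => exact Istep n ih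
end Leg

/-- Gaunt's formula for the cube of an even-order Legendre polynomial: for every even
positive `ℓ = 2s`, `∫_{-1}^1 P_{2s}³ = 2 (2s)!³ (3s)!² / ((6s+1)! s!⁶) > 0`. -/
theorem integral_legendre_cube_even (s : ℕ) (hs : 1 ≤ s) :
    (0 < ∫ u in (-1 : ℝ)..1, ((legendre (2 * s)).eval u) ^ 3) ∧
    (∫ u in (-1 : ℝ)..1, ((legendre (2 * s)).eval u) ^ 3) =
      2 * ((2 * s).factorial : ℝ) ^ 3 * ((3 * s).factorial : ℝ) ^ 2 /
        (((6 * s + 1).factorial : ℝ) * (s.factorial : ℝ) ^ 6) := by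
  have h := Leg.Imain s hs
  have hI : (∫ u in (-1 : ℝ)..1, ((legendre (2 * s)).eval u) ^ 3) = Leg.Ii s := rfl
  rw [hI, h]
  exact ⟨Leg.Tpos s, rfl⟩
end

section
/- Let (X,μ) be a probability space and h : X → ℝ a measurable function with ∫ h dμ = 0 and h ≥ −1, and set H = ∫ h₊ dμ = ∫ h₋ dμ (positive and negative parts). Then ∫ (1+h) log(1+h) dμ ≥ (1+H)log(1+H) + (1−H)log(1−H) ≥ H². -/
/-! With `φ x = (1 + x) * log (1 + x)`, convex on `[-1, ∞)` with `φ 0 = 0`, we have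
`φ h = φ h₊ + φ (-h₋)` pointwise, and Jensen's inequality applied to each part gives
`∫ φ h ≥ φ H + φ (-H)`. For the quadratic bound, `φ t + φ (-t) - t²` vanishes at `0` and its
derivative `log (1 + t) - log (1 - t) - 2 t = 2 ∑_{k ≥ 1} t ^ (2k+1) / (2k+1)` is nonnegative
on `[0, 1)`. -/

open MeasureTheory Real Set

lemma continuous_one_add_mul_log : Continuous fun x : ℝ => (1 + x) * log (1 + x) :=
  continuous_mul_log.comp (continuous_const_add 1)

lemma convexOn_one_add_mul_log : ConvexOn ℝ (Ici (-1)) fun x : ℝ => (1 + x) * log (1 + x) := by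
  have hpre : (fun x : ℝ => 1 + x) ⁻¹' Ici 0 = Ici (-1) := by
    ext x; simp [neg_le_iff_add_nonneg']
  exact hpre ▸ convexOn_mul_log.translate_right (1 : ℝ)

lemma integrable_one_add_mul_log_of_mem_Icc {X : Type*} [MeasurableSpace X] {μ : Measure X}
    [IsFiniteMeasure μ] {g : X → ℝ} {a b : ℝ} (hg : AEStronglyMeasurable g μ)
    (hab : ∀ x, g x ∈ Icc a b) : Integrable (fun x => (1 + g x) * log (1 + g x)) μ := by
  obtain ⟨C, hC⟩ := isCompact_Icc.exists_bound_of_continuousOn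
    continuous_one_add_mul_log.continuousOn
  exact .of_bound (continuous_one_add_mul_log.comp_aestronglyMeasurable hg) C
    (ae_of_all _ fun x => hC _ (hab x))

lemma one_add_integral_mul_log_le {X : Type*} [MeasurableSpace X] {μ : Measure X}
    [IsProbabilityMeasure μ] {g : X → ℝ} (hg : Integrable g μ) (hg₁ : ∀ᵐ x ∂μ, -1 ≤ g x)
    (hφg : Integrable (fun x => (1 + g x) * log (1 + g x)) μ) :
    (1 + ∫ x, g x ∂μ) * log (1 + ∫ x, g x ∂μ) ≤ ∫ x, (1 + g x) * log (1 + g x) ∂μ :=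
  convexOn_one_add_mul_log.map_integral_le continuous_one_add_mul_log.continuousOn isClosed_Ici
    hg₁ hg hφg

lemma two_mul_le_log_one_add_sub_log_one_sub {t : ℝ} (ht₀ : 0 ≤ t) (ht₁ : t < 1) :
    2 * t ≤ log (1 + t) - log (1 - t) := by
  have hsum := hasSum_log_sub_log_of_abs_lt_one (abs_lt.2 ⟨by linarith, ht₁⟩)
  simpa using le_hasSum hsum 0 fun k _ => by positivity

lemma sq_le_one_add_mul_log_add_one_sub_mul_log_of_nonneg {t : ℝ} (ht₀ : 0 ≤ t) (ht₁ : t ≤ 1) :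
    t ^ 2 ≤ (1 + t) * log (1 + t) + (1 - t) * log (1 - t) := by
  set g : ℝ → ℝ := fun t => (1 + t) * log (1 + t) + (1 - t) * log (1 - t) - t ^ 2
  have hderiv : ∀ s ∈ interior (Icc (0 : ℝ) 1),
      HasDerivWithinAt g (log (1 + s) - log (1 - s) - 2 * s) (interior (Icc 0 1)) s := by
    rw [interior_Icc]
    rintro s ⟨hs₀, hs₁⟩
    have hplus := (hasDerivAt_mul_log (x := 1 + s) (by linarith)).comp_const_add 1 s
    have hminus := (hasDerivAt_mul_log (x := 1 - s) (by linarith)).comp_const_sub 1 s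
    exact (((hplus.add hminus).sub (hasDerivAt_pow 2 s)).congr_deriv (by ring)).hasDerivWithinAt
  have hmono : MonotoneOn g (Icc 0 1) := by
    refine monotoneOn_of_hasDerivWithinAt_nonneg (convex_Icc 0 1) ?_ hderiv ?_
    · exact (continuous_one_add_mul_log.add
        (continuous_mul_log.comp (continuous_sub_left 1)) |>.sub (continuous_pow 2)).continuousOn
    · rw [interior_Icc]
      rintro s ⟨hs₀, hs₁⟩
      linarith [two_mul_le_log_one_add_sub_log_one_sub hs₀.le hs₁]
  simpa [g] using hmono ⟨le_rfl, zero_le_one⟩ ⟨ht₀, ht₁⟩ ht₀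

lemma sq_le_one_add_mul_log_add_one_sub_mul_log {t : ℝ} (ht : |t| ≤ 1) :
    t ^ 2 ≤ (1 + t) * log (1 + t) + (1 - t) * log (1 - t) := by
  rcases le_total 0 t with ht₀ | ht₀
  · exact sq_le_one_add_mul_log_add_one_sub_mul_log_of_nonneg ht₀ (le_of_abs_le ht)
  · have := sq_le_one_add_mul_log_add_one_sub_mul_log_of_nonneg (neg_nonneg.2 ht₀)
      (neg_le.1 (neg_le_of_abs_le ht))
    rw [neg_sq, ← sub_eq_add_neg, sub_neg_eq_add] at this
    linarith

lemma one_add_mul_log_eq_posPart_add_negPart (y : ℝ) :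
    (1 + y) * log (1 + y) =
      (1 + max y 0) * log (1 + max y 0) + (1 + -max (-y) 0) * log (1 + -max (-y) 0) := by
  rcases le_total 0 y with hy | hy <;> simp [hy]

lemma one_add_mul_log_integral_posPart_add_negPart_le {X : Type*} [MeasurableSpace X]
    {μ : Measure X} [IsProbabilityMeasure μ] {g : X → ℝ} (hg : Integrable g μ)
    (hg₁ : ∀ x, -1 ≤ g x) (hφg : Integrable (fun x => (1 + g x) * log (1 + g x)) μ) :
    (1 + ∫ x, max (g x) 0 ∂μ) * log (1 + ∫ x, max (g x) 0 ∂μ)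
        + (1 - ∫ x, max (-g x) 0 ∂μ) * log (1 - ∫ x, max (-g x) 0 ∂μ) ≤
      ∫ x, (1 + g x) * log (1 + g x) ∂μ := by
  have hneg_mem : ∀ x, -max (-g x) 0 ∈ Icc (-1) 0 := fun x =>
    ⟨neg_le_neg (max_le (neg_le.1 (hg₁ x)) zero_le_one), neg_nonpos.2 (le_max_right _ _)⟩
  have hφneg : Integrable (fun x => (1 + -max (-g x) 0) * log (1 + -max (-g x) 0)) μ :=
    integrable_one_add_mul_log_of_mem_Icc hg.neg.pos_part.neg.aestronglyMeasurable hneg_mem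
  have hφpos : Integrable (fun x => (1 + max (g x) 0) * log (1 + max (g x) 0)) μ :=
    (hφg.sub hφneg).congr
      (ae_of_all _ fun x => by simp [one_add_mul_log_eq_posPart_add_negPart (g x)])
  calc _ = (1 + ∫ x, max (g x) 0 ∂μ) * log (1 + ∫ x, max (g x) 0 ∂μ)
          + (1 + ∫ x, -max (-g x) 0 ∂μ) * log (1 + ∫ x, -max (-g x) 0 ∂μ) := by
        rw [integral_neg, ← sub_eq_add_neg]
    _ ≤ ∫ x, (1 + max (g x) 0) * log (1 + max (g x) 0) ∂μ
          + ∫ x, (1 + -max (-g x) 0) * log (1 + -max (-g x) 0) ∂μ :=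
        add_le_add
          (one_add_integral_mul_log_le hg.pos_part
            (ae_of_all _ fun x => neg_one_lt_zero.le.trans (le_max_right _ _)) hφpos)
          (one_add_integral_mul_log_le hg.neg.pos_part.neg
            (ae_of_all _ fun x => (hneg_mem x).1) hφneg)
    _ = ∫ x, (1 + g x) * log (1 + g x) ∂μ := by
        rw [← integral_add hφpos hφneg]
        exact integral_congr_ae
          (ae_of_all _ fun x => (one_add_mul_log_eq_posPart_add_negPart (g x)).symm)

theorem entropy_jensen_lower_bound_general {X : Type*} [MeasurableSpace X]
    (μ : Measure X) [IsProbabilityMeasure μ]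
    (h : X → ℝ) (hint : Integrable h μ)
    (hint2 : Integrable (fun x => (1 + h x) * Real.log (1 + h x)) μ)
    (hge : ∀ x, -1 ≤ h x)
    (H : ℝ) (hHp : H = ∫ x, max (h x) 0 ∂μ) (hHm : H = ∫ x, max (-h x) 0 ∂μ) :
    (1 + H) * Real.log (1 + H) + (1 - H) * Real.log (1 - H) ≤
        ∫ x, (1 + h x) * Real.log (1 + h x) ∂μ ∧
    H ^ 2 ≤ (1 + H) * Real.log (1 + H) + (1 - H) * Real.log (1 - H) := by
  have hH₀ : 0 ≤ H := hHp ▸ integral_nonneg fun x => le_max_right _ _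
  have hH₁ : H ≤ 1 := hHm ▸ (integral_mono hint.neg.pos_part (integrable_const 1)
    fun x => max_le (neg_le.1 (hge x)) zero_le_one).trans_eq (by simp)
  refine ⟨?_, sq_le_one_add_mul_log_add_one_sub_mul_log (abs_le.2 ⟨by linarith, hH₁⟩)⟩
  have hjensen := one_add_mul_log_integral_posPart_add_negPart_le hint hge hint2
  rwa [← hHp, ← hHm] at hjensen

/-- Jensen-type entropy bound: on a probability space, if `h` is integrable with
`∫ h = 0` and `h ≥ −1`, and `H = ∫ h₊ = ∫ h₋`, then
`∫ (1+h) log(1+h) ≥ (1+H)log(1+H) + (1−H)log(1−H) ≥ H²`. -/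
theorem entropy_jensen_lower_bound {X : Type*} [MeasurableSpace X]
    (μ : Measure X) [IsProbabilityMeasure μ]
    (h : X → ℝ) (hmeas : Measurable h) (hint : Integrable h μ)
    (hint2 : Integrable (fun x => (1 + h x) * Real.log (1 + h x)) μ)
    (hzero : ∫ x, h x ∂μ = 0) (hge : ∀ x, -1 ≤ h x)
    (H : ℝ) (hHp : H = ∫ x, max (h x) 0 ∂μ) (hHm : H = ∫ x, max (-h x) 0 ∂μ) :
    (1 + H) * Real.log (1 + H) + (1 - H) * Real.log (1 - H) ≤
        ∫ x, (1 + h x) * Real.log (1 + h x) ∂μ ∧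
    H ^ 2 ≤ (1 + H) * Real.log (1 + H) + (1 - H) * Real.log (1 - H) :=
  entropy_jensen_lower_bound_general μ h hint hint2 hge H hHp hHm
end

section
/- Let (X,μ) be a probability space, β, ρ, K > 0 with ρ < 1/(2βK), and h : X → ℝ measurable with ∫h dμ = 0, h ≥ −1/(4π). If F(h) := (ρ/β) ∫ (1+4πh) log(1+4πh) dμ − 8π²ρ²K (∫|h| dμ)², then F(h) ≥ ((ρ/β) − 2ρ²K) H² ≥ 0 where H := 4π∫h₊ dμ, with equality F(h)=0 only if h = 0 μ-almost everywhere. -/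
open MeasureTheory Real

/-- `u - 1 ≤ u log u` for `u ≥ 0`. -/
lemma aux_sub_one_le_mul_log {u : ℝ} (hu : 0 ≤ u) : u - 1 ≤ u * Real.log u := by
  rcases eq_or_lt_of_le hu with h | h
  · simp [← h]
  · have h1 : 1 - u⁻¹ ≤ Real.log u := Real.one_sub_inv_le_log_of_pos h
    have h2 := mul_le_mul_of_nonneg_left h1 h.le
    calc u - 1 = u * (1 - u⁻¹) := by field_simp
    _ ≤ u * Real.log u := h2

/-- Key pointwise bound: `(√(1+s) - 1)² ≤ (1+s) log(1+s) - s` for `s ≥ -1`. -/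
lemma aux_sq_le_mul_log {s : ℝ} (hs : -1 ≤ s) :
    (Real.sqrt (1 + s) - 1) ^ 2 ≤ (1 + s) * Real.log (1 + s) - s := by
  set u := Real.sqrt (1 + s) with hu
  have h0 : (0:ℝ) ≤ 1 + s := by linarith
  have hu0 : 0 ≤ u := Real.sqrt_nonneg _
  have husq : u ^ 2 = 1 + s := Real.sq_sqrt h0
  have hs' : s = u ^ 2 - 1 := by linarith
  have hlog : Real.log (1 + s) = 2 * Real.log u := by
    rw [← husq, Real.log_pow]; push_cast; ring
  have key : u * (u - 1) ≤ u * (u * Real.log u) :=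
    mul_le_mul_of_nonneg_left (aux_sub_one_le_mul_log hu0) hu0
  rw [hlog, ← husq, hs']
  nlinarith [key]

/-- `√(1+s) ≤ 1 + s/2` for `s ≥ -1`. -/
lemma aux_sqrt_le {s : ℝ} (hs : -1 ≤ s) : Real.sqrt (1 + s) ≤ 1 + s / 2 := by
  have h1 : (0:ℝ) ≤ 1 + s / 2 := by linarith
  have h2 : (1 : ℝ) + s ≤ (1 + s / 2) ^ 2 := by nlinarith [sq_nonneg s]
  calc Real.sqrt (1 + s) ≤ Real.sqrt ((1 + s / 2) ^ 2) := Real.sqrt_le_sqrt h2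
  _ = 1 + s / 2 := by rw [Real.sqrt_sq h1]

set_option maxHeartbeats 2000000 in
/-- Low-density uniqueness estimate: on a probability space, for `β, ρ, K > 0` with
`ρ < 1/(2βK)`, a perturbation `h` with `∫ h = 0`, `h ≥ −1/(4π)`, and
`F(h) = (ρ/β) ∫ (1+4πh) log(1+4πh) − 8π²ρ²K (∫|h|)²`, one has
`F(h) ≥ ((ρ/β) − 2ρ²K) H² ≥ 0` with `H = 4π ∫ h₊`, and `F(h) = 0` forces `h = 0` a.e. -/
theorem free_energy_uniqueness_low_density {X : Type*} [MeasurableSpace X]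
    (μ : Measure X) [IsProbabilityMeasure μ]
    (β ρ K : ℝ) (hβ : 0 < β) (hρ : 0 < ρ) (hK : 0 < K)
    (hsmall : ρ < 1 / (2 * β * K))
    (h : X → ℝ) (hmeas : Measurable h) (hint : Integrable h μ)
    (hint2 : Integrable (fun x => (1 + 4 * Real.pi * h x) *
      Real.log (1 + 4 * Real.pi * h x)) μ)
    (hzero : ∫ x, h x ∂μ = 0) (hge : ∀ x, -(1 / (4 * Real.pi)) ≤ h x)
    (H F : ℝ) (hH : H = 4 * Real.pi * ∫ x, max (h x) 0 ∂μ)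
    (hF : F = (ρ / β) * ∫ x, (1 + 4 * Real.pi * h x) *
          Real.log (1 + 4 * Real.pi * h x) ∂μ -
        8 * Real.pi ^ 2 * ρ ^ 2 * K * (∫ x, |h x| ∂μ) ^ 2) :
    (ρ / β - 2 * ρ ^ 2 * K) * H ^ 2 ≤ F ∧
    0 ≤ (ρ / β - 2 * ρ ^ 2 * K) * H ^ 2 ∧
    (F = 0 → h =ᵐ[μ] 0) := by
  have hπ : (0:ℝ) < Real.pi := Real.pi_pos
  set t : X → ℝ := fun x => 4 * Real.pi * h x with ht
  have htm : Measurable t := (hmeas.const_mul _)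
  have htge : ∀ x, -1 ≤ t x := by
    intro x
    have h1 := hge x
    have h2 : -(1 / (4 * Real.pi)) * (4 * Real.pi) ≤ h x * (4 * Real.pi) :=
      mul_le_mul_of_nonneg_right h1 (by positivity)
    have h4 : -(1 / (4 * Real.pi)) * (4 * Real.pi) = -1 := by field_simp
    simp only [ht]; nlinarith
  have hit : Integrable t μ := hint.const_mul _
  have hitz : ∫ x, t x ∂μ = 0 := by
    simp only [ht, integral_const_mul, hzero, mul_zero]
  set u : X → ℝ := fun x => Real.sqrt (1 + t x) with hudef
  have hum : Measurable u := (measurable_const.add htm).sqrt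
  have hu0 : ∀ x, 0 ≤ u x := fun x => Real.sqrt_nonneg _
  have husq : ∀ x, u x ^ 2 = 1 + t x := fun x => Real.sq_sqrt (by linarith [htge x])
  have huble : ∀ x, u x ≤ 1 + t x / 2 := fun x => aux_sqrt_le (htge x)
  have hibound : Integrable (fun x => 1 + t x / 2) μ :=
    (integrable_const (1:ℝ)).add (hit.div_const 2)
  have hiu : Integrable u μ := by
    refine Integrable.mono' hibound hum.aestronglyMeasurable ?_
    filter_upwards with x
    rw [Real.norm_eq_abs, abs_of_nonneg (hu0 x)]
    exact huble x
  set φ : X → ℝ := fun x => (1 + t x) * Real.log (1 + t x) with hφ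
  have hiφ : Integrable φ μ := hint2
  have hiφt : Integrable (fun x => φ x - t x) μ := hiφ.sub hit
  have hkey : ∀ x, (u x - 1) ^ 2 ≤ φ x - t x := fun x => aux_sq_le_mul_log (htge x)
  have hA : Integrable (fun x => (u x - 1) ^ 2) μ := by
    refine Integrable.mono' hiφt ((hum.sub measurable_const).pow_const 2).aestronglyMeasurable ?_
    filter_upwards with x
    rw [Real.norm_eq_abs, abs_of_nonneg (sq_nonneg _)]
    exact hkey x
  have hi1t : Integrable (fun x => 1 + t x) μ := (integrable_const (1:ℝ)).add hit
  have hBfun : ∀ x, (u x + 1) ^ 2 = (1 + t x) + 2 * u x + 1 := by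
    intro x; have := husq x; nlinarith
  have hB : Integrable (fun x => (u x + 1) ^ 2) μ := by
    have h1 : Integrable (fun x => (1 + t x) + 2 * u x + 1) μ :=
      (hi1t.add (hiu.const_mul 2)).add (integrable_const 1)
    exact h1.congr (by filter_upwards with x using (hBfun x).symm)
  have hiabs : Integrable (fun x => |t x|) μ := hit.abs
  have habs_eq : ∀ x, |t x| = |u x - 1| * (u x + 1) := by
    intro x
    have h1 : t x = (u x - 1) * (u x + 1) := by have := husq x; nlinarith
    rw [h1, abs_mul, abs_of_nonneg (by linarith [hu0 x] : (0:ℝ) ≤ u x + 1)]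
  clear_value t u φ
  set A := ∫ x, (u x - 1) ^ 2 ∂μ with hAdef
  set B := ∫ x, (u x + 1) ^ 2 ∂μ with hBdef
  set C := ∫ x, |t x| ∂μ with hCdef
  clear_value A B C
  have hA0 : 0 ≤ A := by rw [hAdef]; exact integral_nonneg fun x => sq_nonneg _
  have hC0 : 0 ≤ C := by rw [hCdef]; exact integral_nonneg fun x => abs_nonneg _
  have hB1 : 1 ≤ B := by
    have h1 : ∫ x, (1:ℝ) ∂μ ≤ B := by
      rw [hBdef]
      refine integral_mono (integrable_const 1) hB fun x => ?_
      nlinarith [hu0 x]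
    simpa using h1
  have hB0 : 0 < B := by linarith
  have hiabs' : Integrable (fun x => |u x - 1| * (u x + 1)) μ :=
    hiabs.congr (by filter_upwards with x using (habs_eq x))
  have hCalt : ∫ x, |u x - 1| * (u x + 1) ∂μ = C := by
    rw [hCdef]; exact integral_congr_ae (by filter_upwards with x using (habs_eq x).symm)
  -- Cauchy–Schwarz: C² ≤ A * B
  have hCS : C ^ 2 ≤ A * B := by
    have hnn : 0 ≤ ∫ x, (B * |u x - 1| - C * (u x + 1)) ^ 2 ∂μ :=
      integral_nonneg fun x => sq_nonneg _
    have hexp : ∀ x, (B * |u x - 1| - C * (u x + 1)) ^ 2 =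
        (B ^ 2 * (u x - 1) ^ 2 - (2 * B * C) * (|u x - 1| * (u x + 1))) +
          C ^ 2 * (u x + 1) ^ 2 := by
      intro x; rw [← sq_abs (u x - 1)]; ring
    have e0 : ∫ x, (B * |u x - 1| - C * (u x + 1)) ^ 2 ∂μ =
        ∫ x, (B ^ 2 * (u x - 1) ^ 2 - (2 * B * C) * (|u x - 1| * (u x + 1))) +
          C ^ 2 * (u x + 1) ^ 2 ∂μ :=
      integral_congr_ae (by filter_upwards with x using hexp x)
    have e1 : ∫ x, (B ^ 2 * (u x - 1) ^ 2 - (2 * B * C) * (|u x - 1| * (u x + 1))) +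
          C ^ 2 * (u x + 1) ^ 2 ∂μ =
        (∫ x, B ^ 2 * (u x - 1) ^ 2 - (2 * B * C) * (|u x - 1| * (u x + 1)) ∂μ) +
          ∫ x, C ^ 2 * (u x + 1) ^ 2 ∂μ :=
      integral_add ((hA.const_mul _).sub (hiabs'.const_mul _)) (hB.const_mul _)
    have e2 : ∫ x, B ^ 2 * (u x - 1) ^ 2 - (2 * B * C) * (|u x - 1| * (u x + 1)) ∂μ =
        (∫ x, B ^ 2 * (u x - 1) ^ 2 ∂μ) - ∫ x, (2 * B * C) * (|u x - 1| * (u x + 1)) ∂μ :=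
      integral_sub (hA.const_mul _) (hiabs'.const_mul _)
    rw [e0, e1, e2, integral_const_mul, integral_const_mul, integral_const_mul, hCalt,
      ← hAdef, ← hBdef] at hnn
    have h5 : 0 ≤ B * (B * A - C ^ 2) := by nlinarith [hnn]
    nlinarith [h5, hB0]
  -- B ≤ 4
  have hBle : B ≤ 4 := by
    have e0 : B = ∫ x, (1 + t x) + 2 * u x + 1 ∂μ := by
      rw [hBdef]; exact integral_congr_ae (by filter_upwards with x using hBfun x)
    have e1 : ∫ x, ((1 + t x) + 2 * u x) + 1 ∂μ =
        (∫ x, (1 + t x) + 2 * u x ∂μ) + ∫ x, (1:ℝ) ∂μ :=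
      integral_add (hi1t.add (hiu.const_mul 2)) (integrable_const 1)
    have e2 : ∫ x, (1 + t x) + 2 * u x ∂μ =
        (∫ x, 1 + t x ∂μ) + ∫ x, 2 * u x ∂μ := integral_add hi1t (hiu.const_mul 2)
    have e3 : ∫ x, (1:ℝ) + t x ∂μ = (∫ x, (1:ℝ) ∂μ) + ∫ x, t x ∂μ :=
      integral_add (integrable_const 1) hit
    have hone : ∫ x, (1:ℝ) ∂μ = 1 := by simp
    have h2 : ∫ x, u x ∂μ ≤ 1 := by
      have h3 : ∫ x, u x ∂μ ≤ ∫ x, 1 + t x / 2 ∂μ := integral_mono hiu hibound huble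
      have e4 : ∫ x, (1:ℝ) + t x / 2 ∂μ = (∫ x, (1:ℝ) ∂μ) + ∫ x, t x / 2 ∂μ :=
        integral_add (integrable_const 1) (hit.div_const 2)
      rw [e4, hone, integral_div, hitz] at h3
      norm_num at h3
      exact h3
    rw [e0, e1, e2, e3, hone, hitz, integral_const_mul]
    linarith
  -- A ≤ I
  have hAI : A ≤ ∫ x, φ x ∂μ := by
    have h1 : A ≤ ∫ x, φ x - t x ∂μ := by
      rw [hAdef]; exact integral_mono hA hiφt hkey
    rwa [integral_sub hiφ hit, hitz, sub_zero] at h1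
  -- relation between C, H, ∫|h|
  have habsh : ∀ x, |h x| = 2 * max (h x) 0 - h x := by
    intro x
    rcases le_total 0 (h x) with hx | hx
    · rw [abs_of_nonneg hx, max_eq_left hx]; ring
    · rw [abs_of_nonpos hx, max_eq_right hx]; ring
  have hmaxint : Integrable (fun x => max (h x) 0) μ := by
    refine Integrable.mono' hint.abs (hmeas.max measurable_const).aestronglyMeasurable ?_
    filter_upwards with x
    rw [Real.norm_eq_abs, abs_of_nonneg (le_max_right _ _)]
    exact max_le (le_abs_self _) (abs_nonneg _)
  have hJ : ∫ x, |h x| ∂μ = 2 * ∫ x, max (h x) 0 ∂μ := by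
    have e0 : ∫ x, |h x| ∂μ = ∫ x, 2 * max (h x) 0 - h x ∂μ :=
      integral_congr_ae (by filter_upwards with x using habsh x)
    rw [e0, integral_sub (hmaxint.const_mul 2) hint, integral_const_mul, hzero, sub_zero]
  have hC2H : C = 2 * H := by
    have habt : ∀ x, |t x| = 4 * Real.pi * |h x| := by
      intro x; simp only [ht]
      rw [abs_mul, abs_of_nonneg (by positivity : (0:ℝ) ≤ 4 * Real.pi)]
    have e0 : C = ∫ x, 4 * Real.pi * |h x| ∂μ := by
      rw [hCdef]; exact integral_congr_ae (by filter_upwards with x using habt x)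
    rw [e0, integral_const_mul, hJ, hH]; ring
  have hH0 : 0 ≤ H := by rw [hC2H] at hC0; linarith
  -- main inequality I ≥ H²
  have hImain : H ^ 2 ≤ ∫ x, φ x ∂μ := by
    have h1 : C ^ 2 ≤ A * 4 := le_trans hCS (mul_le_mul_of_nonneg_left hBle hA0)
    rw [hC2H] at h1
    nlinarith
  have hcoef : 0 < ρ / β - 2 * ρ ^ 2 * K := by
    have h1 : ρ * (2 * β * K) < 1 := (lt_div_iff₀ (by positivity)).mp hsmall
    have h2 : 2 * ρ ^ 2 * K < ρ / β := by
      rw [lt_div_iff₀ hβ]; nlinarith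
    linarith
  have hpen : 8 * Real.pi ^ 2 * ρ ^ 2 * K * (∫ x, |h x| ∂μ) ^ 2 = 2 * ρ ^ 2 * K * H ^ 2 := by
    rw [hJ, hH]; ring
  have hImain' : H ^ 2 ≤ integral μ φ := hImain
  have hmainF : (ρ / β - 2 * ρ ^ 2 * K) * H ^ 2 ≤ F := by
    rw [hF, hpen]
    have h1 : (ρ / β) * H ^ 2 ≤ (ρ / β) * integral μ φ :=
      mul_le_mul_of_nonneg_left hImain' (by positivity)
    nlinarith [h1]
  refine ⟨hmainF, mul_nonneg hcoef.le (sq_nonneg H), fun hF0 => ?_⟩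
  have hH2 : H = 0 := by
    rw [hF0] at hmainF
    by_contra hc
    have hsq : 0 < H ^ 2 := by positivity
    nlinarith [mul_pos hcoef hsq]
  have hmax0 : ∫ x, max (h x) 0 ∂μ = 0 := by
    rw [hH] at hH2
    have h4 : (4 : ℝ) * Real.pi ≠ 0 := by positivity
    exact (mul_eq_zero.mp hH2).resolve_left h4
  have hmaxae : (fun x => max (h x) 0) =ᵐ[μ] 0 :=
    (integral_eq_zero_iff_of_nonneg (fun x => le_max_right _ _) hmaxint).mp hmax0
  have hneg : 0 ≤ᵐ[μ] fun x => -h x := by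
    filter_upwards [hmaxae] with x hx
    simp only [Pi.zero_apply] at hx
    have hle : h x ≤ 0 := by
      by_contra hc
      push_neg at hc
      rw [max_eq_left hc.le] at hx
      linarith
    simpa using hle
  have hnegz : ∫ x, -h x ∂μ = 0 := by rw [integral_neg, hzero, neg_zero]
  have hfin := (integral_eq_zero_iff_of_nonneg_ae hneg hint.neg).mp hnegz
  filter_upwards [hfin] with x hx
  simp only [Pi.zero_apply] at hx ⊢
  linarith
end

section
/- Let F(ρ) := (ρ/β)∫ f log f + (ρ²/2) Q(f,f) where Q is a symmetric bilinear form, and suppose for some ρ > 0 and f ≢ f₀ in the admissible class one has F_ρ(f) ≤ F_ρ(f₀), where f₀ is the uniform probability density. Then for every ρ' > ρ, F_{ρ'}(f) < F_{ρ'}(f₀). In words: if a non-uniform profile ties or beats the uniform profile at density ρ, it strictly beats it at every larger density. -/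
open MeasureTheory Real

lemma mul_log_aux {x : ℝ} (hx : 0 ≤ x) :
    x - 1 ≤ x * Real.log x ∧ (x * Real.log x = x - 1 → x = 1) := by
  rcases hx.eq_or_lt with h | h
  · subst h
    norm_num
  · rcases eq_or_ne x 1 with h1 | h1
    · subst h1; simp
    · have hlt : Real.log x⁻¹ < x⁻¹ - 1 :=
        Real.log_lt_sub_one_of_pos (by positivity) (by simpa using inv_ne_one.mpr h1)
      rw [Real.log_inv] at hlt
      have : x * (-Real.log x) < x * (x⁻¹ - 1) := by
        exact (mul_lt_mul_iff_right₀ h).mpr hlt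
      rw [mul_sub, mul_inv_cancel₀ (ne_of_gt h)] at this
      constructor
      · nlinarith
      · intro he; nlinarith

/-- If a non-uniform profile ties or beats the uniform profile `f₀ ≡ 1` (w.r.t. the
underlying probability measure) at density `ρ`, for the free energy
`F_ρ(g) = (ρ/β) ∫ g log g + (ρ²/2) Q(g,g)` with `Q` a symmetric bilinear form, then it
strictly beats it at every larger density `ρ'`. -/
theorem nonuniform_beats_uniform_at_larger_density {X : Type*} [MeasurableSpace X]
    (μ : Measure X) [IsProbabilityMeasure μ]
    (β ρ ρ' : ℝ) (hβ : 0 < β) (hρ : 0 < ρ) (hρρ' : ρ < ρ')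
    (Q : (X → ℝ) →ₗ[ℝ] (X → ℝ) →ₗ[ℝ] ℝ) (hQsymm : ∀ g₁ g₂, Q g₁ g₂ = Q g₂ g₁)
    (f : X → ℝ) (hfmeas : Measurable f) (hfpos : 0 ≤ᵐ[μ] f)
    (hfnorm : ∫ x, f x ∂μ = 1)
    (hent : Integrable (fun x => f x * Real.log (f x)) μ)
    (hne : ¬ f =ᵐ[μ] fun _ => 1)
    (F : ℝ → (X → ℝ) → ℝ)
    (hF : ∀ (r : ℝ) (g : X → ℝ),
      F r g = (r / β) * ∫ x, g x * Real.log (g x) ∂μ + r ^ 2 / 2 * Q g g)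
    (hle : F ρ f ≤ F ρ fun _ => 1) :
    F ρ' f < F ρ' fun _ => 1 := by
  have hfint : Integrable f μ := integrable_of_integral_eq_one hfnorm
  set E := ∫ x, f x * Real.log (f x) ∂μ with hE
  -- pointwise nonnegativity of g := f log f - (f - 1)
  set g : X → ℝ := fun x => f x * Real.log (f x) - (f x - 1) with hg
  have hgint : Integrable g μ := hent.sub (hfint.sub (integrable_const 1))
  have hgpos : 0 ≤ᵐ[μ] g := by
    filter_upwards [hfpos] with x hx
    simpa [hg] using sub_nonneg.mpr (mul_log_aux hx).1
  have hgeq : ∫ x, g x ∂μ = E := by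
    have h2 : Integrable (fun x => f x - 1) μ := hfint.sub (integrable_const 1)
    rw [hg, integral_sub hent h2, integral_sub hfint (integrable_const 1)]
    simp [hfnorm, hE]
  have hEpos : 0 < E := by
    have hnn : 0 ≤ E := hgeq ▸ integral_nonneg_of_ae hgpos
    rcases hnn.eq_or_lt with h0 | h; swap; · exact h
    exfalso
    have hgz : g =ᵐ[μ] 0 :=
      (integral_eq_zero_iff_of_nonneg_ae hgpos hgint).mp (by rw [hgeq, ← h0])
    apply hne
    filter_upwards [hgz, hfpos] with x hx hx'
    have : f x * Real.log (f x) = f x - 1 := by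
      have := hx; simp [hg] at this; linarith
    exact (mul_log_aux hx').2 this
  have hlog1 : ∫ x, (1 : ℝ) * Real.log 1 ∂μ = 0 := by simp
  rw [hF ρ f, hF ρ (fun _ => 1)] at hle
  rw [hF ρ' f, hF ρ' (fun _ => 1)]
  simp only [hlog1] at hle ⊢
  rw [← hE] at hle ⊢
  set a := Q f f
  set b := Q (fun _ => 1) (fun _ => 1)
  have hβ' : (0:ℝ) < 1 / β := by positivity
  have hρ'pos : 0 < ρ' := lt_trans hρ hρρ'
  clear_value E a b
  have h1 : ρ ^ 2 * (a - b) ≤ -(2 * ρ / β * E) := by linear_combination 2 * hle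
  have h4 : ρ' ^ 2 * (ρ ^ 2 * (a - b)) ≤ ρ' ^ 2 * (-(2 * ρ / β * E)) :=
    mul_le_mul_of_nonneg_left h1 (by positivity)
  have hprod : 0 < (ρ' - ρ) * ρ * ρ' * (E * β⁻¹) :=
    mul_pos (mul_pos (mul_pos (sub_pos.mpr hρρ') hρ) hρ'pos)
      (mul_pos hEpos (inv_pos.mpr hβ))
  have h5 : ρ ^ 2 * (ρ' / β * E + ρ' ^ 2 / 2 * a) < ρ ^ 2 * (0 + ρ' ^ 2 / 2 * b) := by
    linear_combination h4 / 2 + hprod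
  have h6 := lt_of_mul_lt_mul_left h5 (sq_nonneg ρ)
  linarith [h6]
end
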